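/- arXiv:2506.11265 — 2 statements merged into one kernel-verified Lean document; each statement's English description precedes it below -/
import Mathlib

section
/- Assume n ≥ 2 and let t be a lattice point of (n−2)Δ^{d−1}. Suppose j̄_0, j̄_1, …, j̄_ℓ is a path in the tree-linkage graph G(t), where for each 0 ≤ k ≤ ℓ−1 the edge between j̄_k and j̄_{k+1} has near label i_k at j̄_k and near label i'_{k+1} at j̄_{k+1}. Then: (a) for each 0 ≤ k ≤ ℓ−1, in the forest 𝕋(t+e_{j̄_k}) ∖ {(i_k, j̄_k)}, the vertices j̄_0, …, j̄_k lie in a different connected component from the vertices j̄_{k+1}, …, j̄_ℓ; (b) for all 1 ≤ k ≤ k' ≤ ℓ−1, i'_k ≠ i_{k'}; (c) if (i, j̄_k) ∈ T_t = ⋂_{j̄∈[d̄]} 𝕋(t+e_j̄) for some 0 ≤ k ≤ ℓ and i ∈ [n], then i_{k'} ≠ i for all k' ≥ k and i'_{k'} ≠ i for all k' ≤ k. -/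
open Finset

/-- A bipartite graph between `α` and `β`, identified with its edge set. -/
abbrev BGraph (α β : Type*) := Finset (α × β)

section BipartiteDefs

variable {α β : Type*} [DecidableEq α] [DecidableEq β]

/-- Left degree vector. -/
def LD (G : BGraph α β) (a : α) : ℕ := (G.filter fun e => e.1 = a).card

/-- Right degree vector. -/
def RD (G : BGraph α β) (b : β) : ℕ := (G.filter fun e => e.2 = b).card

/-- The simple graph on `α ⊕ β` associated to a bipartite edge set. -/
def toGraph (G : BGraph α β) : SimpleGraph (α ⊕ β) :=
  SimpleGraph.fromRel fun x y => ∃ a b, x = Sum.inl a ∧ y = Sum.inr b ∧ (a, b) ∈ G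

/-- Acyclicity of a bipartite edge set. -/
def Acyclic (G : BGraph α β) : Prop := (toGraph G).IsAcyclic

/-- `U` is a tree on the vertex set `I ⊔ J`. -/
def IsTreeOn (U : BGraph α β) (I : Finset α) (J : Finset β) : Prop :=
  (∀ e ∈ U, e.1 ∈ I ∧ e.2 ∈ J) ∧ Acyclic U ∧
    ∀ x y : α ⊕ β, Sum.elim (· ∈ I) (· ∈ J) x → Sum.elim (· ∈ I) (· ∈ J) y →
      (toGraph U).Reachable x y

/-- `M` is a perfect matching between `I` and `J`. -/
def IsMatching (M : BGraph α β) (I : Finset α) (J : Finset β) : Prop :=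
  (∀ e ∈ M, e.1 ∈ I ∧ e.2 ∈ J) ∧ (∀ a ∈ I, ∃! b : β, (a, b) ∈ M) ∧
    ∀ b ∈ J, ∃! a : α, (a, b) ∈ M

/-- Compatibility of two bipartite graphs. -/
def Compatible (G G' : BGraph α β) : Prop :=
  ∀ (I : Finset α) (J : Finset β) (M M' : BGraph α β),
    M ⊆ G → M' ⊆ G' → IsMatching M I J → IsMatching M' I J → M = M'

end BipartiteDefs

section TopeDefs

variable {n d : ℕ}

/-- The graph of a tope `T : [n] → [d]`. -/
def topeGraph (T : Fin n → Fin d) : BGraph (Fin n) (Fin d) :=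
  Finset.univ.image fun i => (i, T i)

/-- The position (right degree vector) of a tope. -/
def topePos (T : Fin n → Fin d) : Fin d → ℕ :=
  fun j => (Finset.univ.filter fun i => T i = j).card

/-- Standard unit vector `e_j`. -/
def unitVec (j : Fin d) : Fin d → ℕ := fun k => if k = j then 1 else 0

end TopeDefs

/-- Two edge sets differ in exactly one edge. -/
def diffOne {α β : Type*} [DecidableEq α] [DecidableEq β] (A B : BGraph α β) : Prop :=
  (A \ B).card = 1 ∧ (B \ A).card = 1

/-- The tree-linkage graph `G(t)` on the vertex set `[d]`. -/
def TLGraph {n d : ℕ} (Tr : (Fin d → ℕ) → BGraph (Fin n) (Fin d)) (t : Fin d → ℕ) :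
    SimpleGraph (Fin d) :=
  SimpleGraph.fromRel fun j j' => diffOne (Tr (t + unitVec j)) (Tr (t + unitVec j'))

/-- The intersection `T_t` of the trees at positions `t + e_j`, `j ∈ [d]`. -/
def interTree {n d : ℕ} (Tr : (Fin d → ℕ) → BGraph (Fin n) (Fin d)) (t : Fin d → ℕ) :
    BGraph (Fin n) (Fin d) :=
  Finset.univ.filter fun e => ∀ j : Fin d, e ∈ Tr (t + unitVec j)

/-!
Consecutive trees `𝕋(t + e_{j_k})` and `𝕋(t + e_{j_{k+1}})` differ by exchanging the edge
`(i_k, j_k)` for `(i'_{k+1}, j_{k+1})`; deleting either edge leaves their common forest `F_k`.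
Compatibility forces `j_k` and `j_{k+1}` into different components of `F_k`: a path joining them,
the path joining `i'_{k+1}` to `i_k`, and the two exchanged edges would form an even cycle whose
two perfect matchings lie in the two trees. Induction along the path then puts `j_0, …, j_k` in
the component of `j_k`, and, reading the path backwards, `j_{k+1}, …, j_ℓ` in that of `j_{k+1}`;
this is (a). The case `k = k'` of (b) is the exchange argument again, for the trees at `j_{k-1}`
and `j_{k+1}`. Otherwise an edge violating (b) or (c) would join `i_{k'}` to a vertex of the
component of `j_{k'}` in `F_{k'}`, closing a cycle in the tree `𝕋(t + e_{j_{k'}})`.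
-/

open SimpleGraph Sum

theorem SimpleGraph.Walk.reachable_deleteEdges_or {V : Type*} {G : SimpleGraph V} {x y : V}
    (p : G.Walk x y) (u v : V) :
    (G.deleteEdges {s(u, v)}).Reachable x u ∨ (G.deleteEdges {s(u, v)}).Reachable x v ∨
      (G.deleteEdges {s(u, v)}).Reachable x y := by
  induction p with
  | nil => exact .inr (.inr .rfl)
  | @cons x z y h q ih =>
    by_cases hxz : s(x, z) = s(u, v)
    · rcases Sym2.eq_iff.1 hxz with ⟨rfl, -⟩ | ⟨rfl, -⟩
      exacts [.inl .rfl, .inr (.inl .rfl)]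
    · have hadj : (G.deleteEdges {s(u, v)}).Adj x z := by simpa [hxz] using h
      exact ih.imp hadj.reachable.trans (Or.imp hadj.reachable.trans hadj.reachable.trans)

section Forest

variable {α β : Type*} {T T' : BGraph α β} {a a' : α} {b : β}

theorem toGraph_adj {x y : α ⊕ β} :
    (toGraph T).Adj x y ↔
      ∃ a b, (a, b) ∈ T ∧ (x = inl a ∧ y = inr b ∨ x = inr b ∧ y = inl a) := by
  simp only [toGraph, fromRel_adj]
  constructor
  · rintro ⟨-, ⟨a, b, rfl, rfl, h⟩ | ⟨a, b, rfl, rfl, h⟩⟩ <;> exact ⟨a, b, h, by simp⟩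
  · rintro ⟨a, b, h, ⟨rfl, rfl⟩ | ⟨rfl, rfl⟩⟩ <;> simpa using h

theorem toGraph_adj_inl_inr : (toGraph T).Adj (inl a) (inr b) ↔ (a, b) ∈ T := by
  simp [toGraph_adj]

theorem isLeft_eq_not_of_toGraph_adj {x y : α ⊕ β} (h : (toGraph T).Adj x y) :
    x.isLeft = !y.isLeft := by
  obtain ⟨a, b, -, ⟨rfl, rfl⟩ | ⟨rfl, rfl⟩⟩ := toGraph_adj.1 h <;> simp

theorem toGraph_mono (h : T ⊆ T') : toGraph T ≤ toGraph T' := fun _ _ hxy => by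
  obtain ⟨a, b, hab, hxy⟩ := toGraph_adj.1 hxy
  exact toGraph_adj.2 ⟨a, b, h hab, hxy⟩

variable [DecidableEq α] [DecidableEq β]

theorem toGraph_erase :
    toGraph (T.erase (a, b)) = (toGraph T).deleteEdges {s(inl a, inr b)} := by
  ext (x | x) (y | y) <;> simp [toGraph_adj, and_comm, eq_comm]

theorem Acyclic.not_reachable_erase (hT : Acyclic T) (hab : (a, b) ∈ T) :
    ¬ (toGraph (T.erase (a, b))).Reachable (inl a) (inr b) := by
  rw [toGraph_erase, ← isBridge_iff]
  exact isAcyclic_iff_forall_adj_isBridge.1 hT (toGraph_adj_inl_inr.2 hab)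

variable (hT : (toGraph T).Preconnected)
include hT

theorem reachable_erase_or (x : α ⊕ β) :
    (toGraph (T.erase (a, b))).Reachable x (inl a) ∨
      (toGraph (T.erase (a, b))).Reachable x (inr b) := by
  rw [toGraph_erase]
  obtain ⟨p⟩ := hT x (inl a)
  rcases p.reachable_deleteEdges_or (inl a) (inr b) with h | h | h
  exacts [.inl h, .inr h, .inl h]

theorem reachable_erase_of_not_reachable_of_not_reachable {x y z : α ⊕ β}
    (hxz : ¬ (toGraph (T.erase (a, b))).Reachable x z)
    (hyz : ¬ (toGraph (T.erase (a, b))).Reachable y z) :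
    (toGraph (T.erase (a, b))).Reachable x y := by
  rcases reachable_erase_or (a := a) (b := b) hT z with hz | hz <;>
  rcases reachable_erase_or (a := a) (b := b) hT x with hx | hx <;>
  rcases reachable_erase_or (a := a) (b := b) hT y with hy | hy <;>
  first
  | exact hx.trans hy.symm
  | exact absurd (hx.trans hz.symm) hxz
  | exact absurd (hy.trans hz.symm) hyz

theorem reachable_erase_of_not_reachable_erase (hab : (a, b) ∈ T) (ha'b : (a', b) ∈ T)
    (hne : a ≠ a') {x : α ⊕ β} (hx : ¬ (toGraph (T.erase (a', b))).Reachable x (inr b)) :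
    (toGraph (T.erase (a, b))).Reachable x (inr b) := by
  have hsub : toGraph ((T.erase (a', b)).erase (a, b)) ≤ toGraph (T.erase (a, b)) :=
    toGraph_mono (erase_subset_erase _ (erase_subset _ _))
  have hab' : (a, b) ∈ T.erase (a', b) := mem_erase.2 ⟨by simpa using hne, hab⟩
  have ha'b' : (a', b) ∈ T.erase (a, b) := mem_erase.2 ⟨by simpa using hne.symm, ha'b⟩
  obtain ⟨p⟩ := (reachable_erase_or hT x).resolve_right hx
  rcases p.reachable_deleteEdges_or (inl a) (inr b) with h | h | h <;> rw [← toGraph_erase] at h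
  · exact absurd ((h.mono (toGraph_mono (erase_subset _ _))).trans
      (toGraph_adj_inl_inr.2 hab').reachable) hx
  · exact h.mono hsub
  · exact (h.mono hsub).trans (toGraph_adj_inl_inr.2 ha'b').reachable

end Forest

section Matching

variable {α β : Type*}

def IsMatchingOn (M : BGraph α β) (S : Finset (α ⊕ β)) : Prop :=
  IsMatching M S.toLeft S.toRight

variable [DecidableEq α] [DecidableEq β]

theorem IsMatching.union {M M' : BGraph α β} {I I' : Finset α} {J J' : Finset β}
    (hM : IsMatching M I J) (hM' : IsMatching M' I' J') (hI : Disjoint I I')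
    (hJ : Disjoint J J') : IsMatching (M ∪ M') (I ∪ I') (J ∪ J') := by
  obtain ⟨h1, h2, h3⟩ := hM
  obtain ⟨h1', h2', h3'⟩ := hM'
  rw [Finset.disjoint_left] at hI hJ
  refine ⟨by grind, fun a ha => ?_, fun b hb => ?_⟩
  · rcases mem_union.1 ha with ha | ha
    · obtain ⟨b, hb, hu⟩ := h2 a ha
      exact ⟨b, mem_union_left _ hb, fun b' hb' => by grind⟩
    · obtain ⟨b, hb, hu⟩ := h2' a ha
      exact ⟨b, mem_union_right _ hb, fun b' hb' => by grind⟩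
  · rcases mem_union.1 hb with hb | hb
    · obtain ⟨a, ha, hu⟩ := h3 b hb
      exact ⟨a, mem_union_left _ ha, fun a' ha' => by grind⟩
    · obtain ⟨a, ha, hu⟩ := h3' b hb
      exact ⟨a, mem_union_right _ ha, fun a' ha' => by grind⟩

theorem IsMatchingOn.union {M M' : BGraph α β} {S S' : Finset (α ⊕ β)} (hM : IsMatchingOn M S)
    (hM' : IsMatchingOn M' S') (hS : Disjoint S S') : IsMatchingOn (M ∪ M') (S ∪ S') := by
  rw [IsMatchingOn, toLeft_union, toRight_union]
  refine IsMatching.union hM hM' (Finset.disjoint_left.2 fun a ha ha' => ?_)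
    (Finset.disjoint_left.2 fun b hb hb' => ?_)
  exacts [Finset.disjoint_left.1 hS (mem_toLeft.1 ha) (mem_toLeft.1 ha'),
    Finset.disjoint_left.1 hS (mem_toRight.1 hb) (mem_toRight.1 hb')]

theorem IsMatchingOn.insert {M : BGraph α β} {S : Finset (α ⊕ β)} (hM : IsMatchingOn M S)
    {a : α} {b : β} (ha : inl a ∉ S) (hb : inr b ∉ S) :
    IsMatchingOn (insert (a, b) M) (insert (inl a) (insert (inr b) S)) := by
  have hab : IsMatchingOn {(a, b)} {inl a, inr b} := by
    refine ⟨?_, ?_, ?_⟩ <;> simp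
  rw [insert_eq, insert_eq, insert_eq, ← union_assoc]
  exact hab.union hM (by simp [ha, hb])

theorem exists_isMatchingOn_support_erase {F : BGraph α β} :
    ∀ {x y : α ⊕ β} (p : (toGraph F).Walk x y), p.IsPath → x.isLeft = y.isLeft →
      ∃ M ⊆ F, IsMatchingOn M (p.support.toFinset.erase y)
  | _, _, .nil, _, _ => ⟨∅, empty_subset _, by refine ⟨?_, ?_, ?_⟩ <;> simp⟩
  | _, _, .cons h .nil, _, hside =>
    absurd hside (by rw [isLeft_eq_not_of_toGraph_adj h]; exact Bool.not_ne_self _)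
  | x, y, .cons (v := v) h (.cons h' q), hp, hside => by
    simp only [Walk.cons_isPath_iff, Walk.support_cons, List.mem_cons, not_or] at hp
    obtain ⟨⟨hq, hvq⟩, hxv, hxq⟩ := hp
    obtain ⟨M, hMF, hM⟩ := exists_isMatchingOn_support_erase q hq <| by
      rw [← hside, isLeft_eq_not_of_toGraph_adj h, isLeft_eq_not_of_toGraph_adj h', Bool.not_not]
    have hyq := q.end_mem_support
    have hS : (Walk.cons h (.cons h' q)).support.toFinset.erase y =
        insert x (insert v (q.support.toFinset.erase y)) := by
      simp only [Walk.support_cons, List.toFinset_cons]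
      rw [erase_insert_of_ne (by grind), erase_insert_of_ne (by grind)]
    have hx : x ∉ q.support.toFinset.erase y := by simp [hxq]
    have hv : v ∉ q.support.toFinset.erase y := by simp [hvq]
    obtain ⟨a, b, hab, ⟨rfl, rfl⟩ | ⟨rfl, rfl⟩⟩ := toGraph_adj.1 h
    · rw [hS]
      exact ⟨_, insert_subset hab hMF, hM.insert hx hv⟩
    · rw [hS, insert_comm]
      exact ⟨_, insert_subset hab hMF, hM.insert hv hx⟩

/-- The even cycle `P, (a', b'), Q, (a, b)` has a perfect matching through `(a, b)`. -/
theorem exists_isMatchingOn_insert {F : BGraph α β} {a a' : α} {b b' : β}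
    {P : (toGraph F).Walk (inr b) (inr b')} (hP : P.IsPath)
    {Q : (toGraph F).Walk (inl a') (inl a)} (hQ : Q.IsPath)
    (hPQ : Disjoint P.support.toFinset Q.support.toFinset) :
    ∃ M ⊆ F, IsMatchingOn (insert (a, b) M) (P.support.toFinset ∪ Q.support.toFinset) := by
  obtain ⟨MP, hMPF, hMP⟩ := exists_isMatchingOn_support_erase P.reverse hP.reverse rfl
  obtain ⟨MQ, hMQF, hMQ⟩ := exists_isMatchingOn_support_erase Q hQ rfl
  rw [Walk.support_reverse, List.toFinset_reverse] at hMP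
  have hbP : inr b ∈ P.support.toFinset := by simp
  have haQ : inl a ∈ Q.support.toFinset := by simp
  have hM := (hMP.union hMQ (disjoint_of_subset_left (erase_subset _ _)
    (disjoint_of_subset_right (erase_subset _ _) hPQ))).insert (a := a) (b := b)
    (by simp [Finset.disjoint_right.1 hPQ haQ]) (by simp [Finset.disjoint_left.1 hPQ hbP])
  refine ⟨MP ∪ MQ, union_subset hMPF hMQF, ?_⟩
  convert hM using 1
  ext v
  simp only [mem_insert, mem_union, mem_erase]
  grind

end Matching

section Exchange

variable {α β : Type*} [DecidableEq α] [DecidableEq β]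

theorem not_reachable_erase_of_erase_eq {T T' : BGraph α β} (hT : (toGraph T).Preconnected)
    (hT' : Acyclic T') (hTT' : Compatible T T') {a a' : α} {b b' : β} (hab : (a, b) ∈ T)
    (hab' : (a, b) ∉ T') (ha'b' : (a', b') ∈ T') (hF : T.erase (a, b) = T'.erase (a', b')) :
    ¬ (toGraph (T.erase (a, b))).Reachable (inr b) (inr b') := by
  intro hbb'
  have ha'b'_sep : ¬ (toGraph (T.erase (a, b))).Reachable (inl a') (inr b') :=
    hF ▸ hT'.not_reachable_erase ha'b'
  obtain ⟨P, hP⟩ := hbb'.exists_isPath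
  obtain ⟨Q, hQ⟩ := ((reachable_erase_or hT (inl a')).resolve_right
    fun h => ha'b'_sep (h.trans hbb')).exists_isPath
  have hPQ : Disjoint P.support.toFinset Q.support.toFinset := by
    refine Finset.disjoint_left.2 fun v hvP hvQ => ha'b'_sep ?_
    rw [List.mem_toFinset] at hvP hvQ
    exact (Q.takeUntil v hvQ).reachable.trans ((P.takeUntil v hvP).reachable.symm.trans hbb')
  obtain ⟨M, hMF, hM⟩ := exists_isMatchingOn_insert hP hQ hPQ
  obtain ⟨M', hM'F, hM'⟩ := exists_isMatchingOn_insert hP.reverse hQ.reverse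
    (by simpa only [Walk.support_reverse, List.toFinset_reverse] using hPQ)
  simp only [Walk.support_reverse, List.toFinset_reverse] at hM'
  have hMM' := hTT' _ _ _ _ (insert_subset hab (hMF.trans (erase_subset _ _)))
    (insert_subset ha'b' (hM'F.trans (hF ▸ erase_subset _ _))) hM hM'
  exact hab' (insert_subset ha'b' (hM'F.trans (hF ▸ erase_subset _ _))
    (hMM' ▸ mem_insert_self _ _))

structure ExchangePath (T : ℕ → BGraph α β) (ℓ : ℕ) (j : ℕ → β) (i i' : ℕ → α) : Prop where
  acyclic : ∀ k ≤ ℓ, Acyclic (T k)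
  preconnected : ∀ k ≤ ℓ, (toGraph (T k)).Preconnected
  compatible : ∀ k ≤ ℓ, ∀ k' ≤ ℓ, Compatible (T k) (T k')
  injOn : Set.InjOn j (Set.Iic ℓ)
  mem : ∀ k < ℓ, (i k, j k) ∈ T k
  mem' : ∀ k < ℓ, (i' (k + 1), j (k + 1)) ∈ T (k + 1)
  erase_eq : ∀ k < ℓ, (T k).erase (i k, j k) = (T (k + 1)).erase (i' (k + 1), j (k + 1))

namespace ExchangePath

variable {T : ℕ → BGraph α β} {ℓ : ℕ} {j : ℕ → β} {i i' : ℕ → α} (h : ExchangePath T ℓ j i i')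
  {a k m : ℕ} {x : α}
include h

theorem reverse :
    ExchangePath (fun k => T (ℓ - k)) ℓ (fun k => j (ℓ - k)) (fun k => i' (ℓ - k))
      (fun k => i (ℓ - k)) where
  acyclic _ _ := h.acyclic _ (Nat.sub_le _ _)
  preconnected _ _ := h.preconnected _ (Nat.sub_le _ _)
  compatible _ _ _ _ := h.compatible _ (Nat.sub_le _ _) _ (Nat.sub_le _ _)
  injOn a ha b hb hab := by
    have := h.injOn (Set.mem_Iic.2 (Nat.sub_le ℓ a)) (Set.mem_Iic.2 (Nat.sub_le ℓ b)) hab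
    simp only [Set.mem_Iic] at ha hb
    omega
  mem k hk := by
    simpa only [show ℓ - (k + 1) + 1 = ℓ - k by omega] using h.mem' (ℓ - (k + 1)) (by omega)
  mem' k _ := h.mem _ (by omega)
  erase_eq k hk := by
    simpa only [show ℓ - (k + 1) + 1 = ℓ - k by omega] using
      (h.erase_eq (ℓ - (k + 1)) (by omega)).symm

theorem pair_ne (ha : a ≤ ℓ) (hk : k ≤ ℓ) (hak : a ≠ k) {x' : α} : (x, j a) ≠ (x', j k) :=
  fun hxy => hak (h.injOn (Set.mem_Iic.2 ha) (Set.mem_Iic.2 hk) (congrArg Prod.snd hxy))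

theorem mem_succ_of_mem {y : β} (hk : k < ℓ) (hxy : (x, y) ∈ T k) (hne : (x, y) ≠ (i k, j k)) :
    (x, y) ∈ T (k + 1) :=
  mem_of_mem_erase (h.erase_eq k hk ▸ mem_erase.2 ⟨hne, hxy⟩)

theorem not_mem_succ (hk : k < ℓ) : (i k, j k) ∉ T (k + 1) := fun hmem =>
  notMem_erase (i k, j k) (T k) <|
    h.erase_eq k hk ▸ mem_erase.2 ⟨h.pair_ne hk.le hk (by omega), hmem⟩

theorem not_reachable_succ (hk : k < ℓ) :
    ¬ (toGraph ((T k).erase (i k, j k))).Reachable (inr (j k)) (inr (j (k + 1))) :=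
  not_reachable_erase_of_erase_eq (h.preconnected k hk.le) (h.acyclic (k + 1) hk)
    (h.compatible _ hk.le _ hk) (h.mem k hk) (h.not_mem_succ hk) (h.mem' k hk) (h.erase_eq k hk)

/-- Otherwise `T k` and `T (k + 2)` would be related by a single exchange whose right endpoints
`j k` and `j (k + 2)` lie on the same side of the common forest. -/
theorem i'_ne_i (hk : k + 1 < ℓ) : i' (k + 1) ≠ i (k + 1) := by
  intro hii
  have hF₁ : (T k).erase (i k, j k) = (T (k + 1)).erase (i (k + 1), j (k + 1)) := by
    rw [h.erase_eq k (by omega), hii]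
  have hF₂ := hF₁.trans (h.erase_eq (k + 1) hk)
  have hnot : (i k, j k) ∉ T (k + 2) := fun hmem => notMem_erase (i k, j k) (T k) <|
    hF₂ ▸ mem_erase.2 ⟨h.pair_ne (by omega) hk (by omega), hmem⟩
  refine not_reachable_erase_of_erase_eq (h.preconnected k (by omega)) (h.acyclic _ hk)
    (h.compatible _ (by omega) _ hk) (h.mem k (by omega)) hnot (h.mem' _ hk) hF₂ ?_
  refine reachable_erase_of_not_reachable_of_not_reachable (h.preconnected k (by omega))
    (h.not_reachable_succ (by omega)) fun hr => h.not_reachable_succ hk ?_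
  exact hF₁ ▸ hr.symm

theorem reachable_of_le (hk : k < ℓ) (ha : a ≤ k) :
    (toGraph ((T k).erase (i k, j k))).Reachable (inr (j a)) (inr (j k)) := by
  induction k with
  | zero => exact Nat.le_zero.1 ha ▸ .rfl
  | succ m ih =>
    rcases ha.eq_or_lt with rfl | ha
    · exact .rfl
    have hsep : ¬ (toGraph ((T m).erase (i m, j m))).Reachable (inr (j a)) (inr (j (m + 1))) :=
      fun hr => h.not_reachable_succ (by omega) ((ih (by omega) (by omega)).symm.trans hr)
    rw [h.erase_eq m (by omega)] at hsep
    exact reachable_erase_of_not_reachable_erase (h.preconnected _ hk.le) (h.mem _ hk)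
      (h.mem' m (by omega)) (h.i'_ne_i hk).symm hsep

theorem reachable_of_lt {b : ℕ} (hb : b ≤ ℓ) (hkb : k < b) :
    (toGraph ((T k).erase (i k, j k))).Reachable (inr (j b)) (inr (j (k + 1))) := by
  have := h.reverse.reachable_of_le (k := ℓ - (k + 1)) (a := ℓ - b) (by omega) (by omega)
  rw [show ℓ - (ℓ - (k + 1)) = k + 1 by omega, show ℓ - (ℓ - b) = b by omega] at this
  rwa [h.erase_eq k (by omega)]

theorem not_reachable_of_le_of_lt {b : ℕ} (hk : k < ℓ) (ha : a ≤ k) (hb : b ≤ ℓ) (hkb : k < b) :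
    ¬ (toGraph ((T k).erase (i k, j k))).Reachable (inr (j a)) (inr (j b)) := fun hr =>
  h.not_reachable_succ hk
    (((h.reachable_of_le hk ha).symm.trans hr).trans (h.reachable_of_lt hb hkb))

theorem ne_i_of_mem (hk : k < ℓ) (hak : a < k) (hx : (x, j a) ∈ T k) : x ≠ i k := by
  rintro rfl
  refine (h.acyclic k hk.le).not_reachable_erase (h.mem k hk) ?_
  have hadj : (toGraph ((T k).erase (i k, j k))).Adj (inl (i k)) (inr (j a)) :=
    toGraph_adj_inl_inr.2 (mem_erase.2 ⟨h.pair_ne (by omega) hk.le hak.ne, hx⟩)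
  exact hadj.reachable.trans (h.reachable_of_le hk hak.le)

theorem mem'_of_le (hk : k < ℓ) (hkm : k + 1 ≤ m) (hm : m ≤ ℓ) :
    (i' (k + 1), j (k + 1)) ∈ T m := by
  induction m, hkm using Nat.le_induction with
  | base => exact h.mem' k hk
  | succ m hkm ih =>
    refine h.mem_succ_of_mem (by omega) (ih (by omega)) ?_
    rcases hkm.eq_or_lt with rfl | hlt
    · simpa using h.i'_ne_i (by omega)
    · exact h.pair_ne (by omega) (by omega) hlt.ne

theorem i'_ne_i_of_le (hkk' : k + 1 ≤ m) (hm : m < ℓ) : i' (k + 1) ≠ i m := by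
  rcases hkk'.eq_or_lt with rfl | hlt
  · exact h.i'_ne_i hm
  · exact h.ne_i_of_mem hm hlt (h.mem'_of_le (by omega) hkk' hm.le)

theorem i_ne_of_forall_mem (hx : ∀ m ≤ ℓ, (x, j a) ∈ T m) (ha : a ≤ k) (hk : k < ℓ) :
    i k ≠ x := by
  rcases ha.eq_or_lt with rfl | hlt
  · rintro rfl
    exact h.not_mem_succ hk (hx _ hk)
  · exact (h.ne_i_of_mem hk hlt (hx k hk.le)).symm

theorem i'_ne_of_forall_mem (hx : ∀ m ≤ ℓ, (x, j a) ∈ T m) (ha : a ≤ ℓ) (hk : k < a) :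
    i' (k + 1) ≠ x := by
  have := h.reverse.i_ne_of_forall_mem (a := ℓ - a) (k := ℓ - (k + 1))
    (fun m hm => by simpa only [show ℓ - (ℓ - a) = a by omega] using hx _ (Nat.sub_le ℓ m))
    (by omega) (by omega)
  rwa [show ℓ - (ℓ - (k + 1)) = k + 1 by omega] at this

end ExchangePath

end Exchange

theorem erase_eq_erase_of_diffOne {α β : Type*} [DecidableEq α] [DecidableEq β]
    {A B : BGraph α β} {x y : α × β} (hAB : diffOne A B) (hx : x ∈ A) (hxB : x ∉ B)
    (hy : y ∈ B) (hyA : y ∉ A) : A.erase x = B.erase y := by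
  have hA : ∀ z ∈ A, z ∉ B → z = x := fun z hz hzB =>
    card_le_one.1 hAB.1.le _ (mem_sdiff.2 ⟨hz, hzB⟩) _ (mem_sdiff.2 ⟨hx, hxB⟩)
  have hB : ∀ z ∈ B, z ∉ A → z = y := fun z hz hzA =>
    card_le_one.1 hAB.2.le _ (mem_sdiff.2 ⟨hz, hzA⟩) _ (mem_sdiff.2 ⟨hy, hyA⟩)
  ext z
  simp only [mem_erase]
  grind

theorem IsTreeOn.preconnected {α β : Type*} [Fintype α] [Fintype β] {U : BGraph α β}
    (hU : IsTreeOn U univ univ) : (toGraph U).Preconnected :=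
  fun x y => hU.2.2 x y (by cases x <;> simp) (by cases y <;> simp)

theorem sum_add_unitVec {d : ℕ} (t : Fin d → ℕ) (c : Fin d) :
    ∑ x, (t + unitVec c) x = ∑ x, t x + 1 := by
  simp [sum_add_distrib, unitVec]

theorem statement8_general {n d : ℕ}
    (Tr : (Fin d → ℕ) → BGraph (Fin n) (Fin d))
    (htree : ∀ u : Fin d → ℕ, (∑ j, u j) + 1 = n → IsTreeOn (Tr u) Finset.univ Finset.univ)
    (hcompat : ∀ u u' : Fin d → ℕ, (∑ j, u j) + 1 = n → (∑ j, u' j) + 1 = n →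
      Compatible (Tr u) (Tr u'))
    (t : Fin d → ℕ) (ht : (∑ j, t j) + 2 = n) (ℓ : ℕ)
    (j : ℕ → Fin d) (i i' : ℕ → Fin n)
    (hinj : ∀ k ≤ ℓ, ∀ k' ≤ ℓ, j k = j k' → k = k')
    (hadj : ∀ k < ℓ, (TLGraph Tr t).Adj (j k) (j (k + 1)))
    (hi : ∀ k < ℓ, (i k, j k) ∈ Tr (t + unitVec (j k)) ∧
      (i k, j k) ∉ Tr (t + unitVec (j (k + 1))))
    (hi' : ∀ k < ℓ, (i' (k + 1), j (k + 1)) ∈ Tr (t + unitVec (j (k + 1))) ∧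
      (i' (k + 1), j (k + 1)) ∉ Tr (t + unitVec (j k))) :
    (∀ k < ℓ, ∀ a ≤ k, ∀ b ≤ ℓ, k < b →
      ¬ (toGraph ((Tr (t + unitVec (j k))).erase (i k, j k))).Reachable
          (Sum.inr (j a)) (Sum.inr (j b))) ∧
    (∀ k k' : ℕ, 1 ≤ k → k ≤ k' → k' < ℓ → i' k ≠ i k') ∧
    (∀ k ≤ ℓ, ∀ i0 : Fin n, (i0, j k) ∈ interTree Tr t →
      (∀ k' : ℕ, k ≤ k' → k' < ℓ → i k' ≠ i0) ∧
        ∀ k' : ℕ, 1 ≤ k' → k' ≤ k → i' k' ≠ i0) := by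
  have hpos (c : Fin d) : (∑ x, (t + unitVec c) x) + 1 = n := by rw [sum_add_unitVec]; omega
  have hP : ExchangePath (fun k => Tr (t + unitVec (j k))) ℓ j i i' :=
    { acyclic := fun k _ => (htree _ (hpos _)).2.1
      preconnected := fun k _ => (htree _ (hpos _)).preconnected
      compatible := fun k _ k' _ => hcompat _ _ (hpos _) (hpos _)
      injOn := fun k hk k' hk' => hinj k hk k' hk'
      mem := fun k hk => (hi k hk).1
      mem' := fun k hk => (hi' k hk).1
      erase_eq := fun k hk => by
        have hd := (fromRel_adj _ _ _).1 (hadj k hk)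
        exact erase_eq_erase_of_diffOne (hd.2.elim id And.symm) (hi k hk).1 (hi k hk).2
          (hi' k hk).1 (hi' k hk).2 }
  refine ⟨fun k hk a ha b hb hkb => hP.not_reachable_of_le_of_lt hk ha hb hkb,
    fun k k' hk hkk' hk' => ?_, fun k hk i0 hi0 => ?_⟩
  · obtain ⟨k, rfl⟩ := Nat.exists_eq_add_of_le' hk
    exact hP.i'_ne_i_of_le hkk' hk'
  · have hmem (m : ℕ) (_ : m ≤ ℓ) : (i0, j k) ∈ Tr (t + unitVec (j m)) := (mem_filter.1 hi0).2 _
    refine ⟨fun k' hkk' hk' => hP.i_ne_of_forall_mem hmem hkk' hk', fun k' hk' hk'k => ?_⟩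
    obtain ⟨k', rfl⟩ := Nat.exists_eq_add_of_le' hk'
    exact hP.i'_ne_of_forall_mem hmem hk (by omega)

theorem statement8 {n d : ℕ} (hn : 2 ≤ n)
    (Tr : (Fin d → ℕ) → BGraph (Fin n) (Fin d))
    (htree : ∀ u : Fin d → ℕ, (∑ j, u j) + 1 = n → IsTreeOn (Tr u) Finset.univ Finset.univ)
    (hRDeg : ∀ u : Fin d → ℕ, (∑ j, u j) + 1 = n → ∀ j, RD (Tr u) j = u j + 1)
    (hcompat : ∀ u u' : Fin d → ℕ, (∑ j, u j) + 1 = n → (∑ j, u' j) + 1 = n →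
      Compatible (Tr u) (Tr u'))
    (hlink : ∀ u : Fin d → ℕ, (∑ j, u j) + 1 = n → ∀ e ∈ Tr u,
      2 ≤ LD (Tr u) e.1 → 2 ≤ RD (Tr u) e.2 →
      ∃ u' : Fin d → ℕ, ((∑ j, u' j) + 1 = n) ∧ ∃ e' ∈ Tr u',
        (Tr u).erase e = (Tr u').erase e')
    (t : Fin d → ℕ) (ht : (∑ j, t j) + 2 = n) (ℓ : ℕ)
    (j : ℕ → Fin d) (i i' : ℕ → Fin n)
    (hinj : ∀ k ≤ ℓ, ∀ k' ≤ ℓ, j k = j k' → k = k')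
    (hadj : ∀ k < ℓ, (TLGraph Tr t).Adj (j k) (j (k + 1)))
    (hi : ∀ k < ℓ, (i k, j k) ∈ Tr (t + unitVec (j k)) ∧
      (i k, j k) ∉ Tr (t + unitVec (j (k + 1))))
    (hi' : ∀ k < ℓ, (i' (k + 1), j (k + 1)) ∈ Tr (t + unitVec (j (k + 1))) ∧
      (i' (k + 1), j (k + 1)) ∉ Tr (t + unitVec (j k))) :
    (∀ k < ℓ, ∀ a ≤ k, ∀ b ≤ ℓ, k < b →
      ¬ (toGraph ((Tr (t + unitVec (j k))).erase (i k, j k))).Reachable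
          (Sum.inr (j a)) (Sum.inr (j b))) ∧
    (∀ k k' : ℕ, 1 ≤ k → k ≤ k' → k' < ℓ → i' k ≠ i k') ∧
    (∀ k ≤ ℓ, ∀ i0 : Fin n, (i0, j k) ∈ interTree Tr t →
      (∀ k' : ℕ, k ≤ k' → k' < ℓ → i k' ≠ i0) ∧
        ∀ k' : ℕ, 1 ≤ k' → k' ≤ k → i' k' ≠ i0) :=
  statement8_general Tr htree hcompat t ht ℓ j i i' hinj hadj hi hi'
end

section
/- Let 𝒯 = {T_v} be an extended (n,d)-tope arrangement with n ≥ 2 and d ≥ 2. (i) (Contraction) For every j̄ ∈ [d̄], the topes T_v with v_j̄ = 0, viewed as topes between [n] and [d̄]∖{j̄}, form an extended (n, d−1)-tope arrangement. (ii) (Deletion) For every i ∈ [n], the restrictions T_v|_{[n]∖{i}} (delete vertex i and its incident edge) form an extended (n−1, d)-tope arrangement on [n]∖{i} and [d̄]: for each lattice point v' of (n−1)Δ^{d−1} there is exactly one graph among the restrictions with right degree vector v', and the restrictions are pairwise compatible. -/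
open Finset

/-!
Two topes `f g : [n] → [d̄]` span an exchange digraph on `[d̄]`, with an arc `g i → f i` for
every `i` on which they differ. A directed cycle in it contains a set `J` of colours on which
the arcs induce a fixed-point-free bijection `φ`; choosing one arc `ψ y` out of each `y ∈ J`,
`{(ψ y, φ y)} ⊆ f` and `{(ψ y, y)} ⊆ g` are different perfect matchings of `ψ J` with `J`, so
compatible topes have acyclic exchange digraphs. A cut argument then gives `f i₀ = g i₀` as soon
as every `R ∋ f i₀` has `∑_{x ∈ R} pos f x ≤ ∑_{x ∈ R} pos g x`. Hence compatible topes with the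
same position are equal (uniqueness in the deletion), and the tope at `v' + e_j` with
`j = T_{v' + e_{j₁}}(i₀)` again sends `i₀` to `j`, so deleting `i₀` from it leaves position `v'`
(existence). Everything else is relabelling along injective maps.
-/

open Function Relation

theorem Finset.exists_bijOn_of_mapsTo {β : Type*} [DecidableEq β] {K : Finset β}
    (hK : K.Nonempty) {φ : β → β} (hφ : Set.MapsTo φ K K) :
    ∃ J ⊆ K, J.Nonempty ∧ Set.BijOn φ J J := by
  classical
  obtain ⟨J, hJ, hmin⟩ :=
    (K.powerset.filter fun J : Finset β => J.Nonempty ∧ Set.MapsTo φ J J).exists_min_image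
    card ⟨K, mem_filter.2 ⟨mem_powerset_self K, hK, hφ⟩⟩
  obtain ⟨hJK, hJne, hJφ⟩ := mem_filter.1 hJ
  have hsub : J.image φ ⊆ J := fun y hy => by
    obtain ⟨x, hx, rfl⟩ := mem_image.1 hy
    exact hJφ hx
  have himage : J.image φ = J := eq_of_subset_of_card_le hsub <| hmin _ <|
    mem_filter.2 ⟨mem_powerset.2 (hsub.trans (mem_powerset.1 hJK)), hJne.image φ,
      fun y hy => mem_coe.2 (mem_image_of_mem φ (hsub hy))⟩
  refine ⟨J, mem_powerset.1 hJK, hJne, (J.finite_toSet.surjOn_iff_bijOn_of_mapsTo hJφ).1 ?_⟩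
  intro y hy
  obtain ⟨x, hx, rfl⟩ := mem_image.1 (himage.symm ▸ hy : y ∈ J.image φ)
  exact ⟨x, hx, rfl⟩

section Matching

variable {α β α' β' : Type*}

theorem isMatching_image [DecidableEq α] [DecidableEq β] {J : Finset β} {ψ : β → α}
    {τ : β → β} (hψ : Set.InjOn ψ J) (hτ : Set.BijOn τ J J) :
    IsMatching (J.image fun y => (ψ y, τ y)) (J.image ψ) J := by
  refine ⟨fun e he => ?_, fun a ha => ?_, fun b hb => ?_⟩
  · obtain ⟨y, hy, rfl⟩ := mem_image.1 he
    exact ⟨mem_image_of_mem ψ hy, hτ.mapsTo hy⟩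
  · obtain ⟨y, hy, rfl⟩ := mem_image.1 ha
    refine ⟨τ y, mem_image_of_mem _ hy, fun b hb => ?_⟩
    obtain ⟨y', hy', hyy'⟩ := mem_image.1 hb
    obtain ⟨h, rfl⟩ := Prod.mk.inj hyy'
    rw [hψ hy' hy h]
  · obtain ⟨y, hy, rfl⟩ := hτ.surjOn (mem_coe.2 hb)
    refine ⟨ψ y, mem_image_of_mem _ hy, fun a ha => ?_⟩
    obtain ⟨y', hy', hyy'⟩ := mem_image.1 ha
    obtain ⟨rfl, h⟩ := Prod.mk.inj hyy'
    rw [hτ.injOn hy' hy h]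

theorem IsMatching.image_prodMap [DecidableEq α'] [DecidableEq β'] {u : α → α'} {w : β → β'}
    (hu : Injective u) (hw : Injective w) {M : BGraph α β} {I : Finset α} {J : Finset β}
    (h : IsMatching M I J) :
    IsMatching (M.image (Prod.map u w)) (I.image u) (J.image w) := by
  obtain ⟨hIJ, hI, hJ⟩ := h
  refine ⟨fun e he => ?_, fun a' ha' => ?_, fun b' hb' => ?_⟩
  · obtain ⟨p, hp, rfl⟩ := mem_image.1 he
    exact ⟨mem_image_of_mem u (hIJ p hp).1, mem_image_of_mem w (hIJ p hp).2⟩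
  · obtain ⟨a, ha, rfl⟩ := mem_image.1 ha'
    obtain ⟨b, hb, hbu⟩ := hI a ha
    refine ⟨w b, mem_image.2 ⟨(a, b), hb, rfl⟩, fun b' hb' => ?_⟩
    obtain ⟨⟨x, y⟩, hxy, hpe⟩ := mem_image.1 hb'
    obtain ⟨hx, rfl⟩ := Prod.mk.inj hpe
    rw [hu hx] at hxy
    rw [hbu y hxy]
  · obtain ⟨b, hb, rfl⟩ := mem_image.1 hb'
    obtain ⟨a, ha, hau⟩ := hJ b hb
    refine ⟨u a, mem_image.2 ⟨(a, b), ha, rfl⟩, fun a' ha' => ?_⟩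
    obtain ⟨⟨x, y⟩, hxy, hpe⟩ := mem_image.1 ha'
    obtain ⟨rfl, hy⟩ := Prod.mk.inj hpe
    rw [hw hy] at hxy
    rw [hau x hxy]

theorem Compatible.of_prodMap [DecidableEq α'] [DecidableEq β'] {u : α → α'} {w : β → β'}
    (hu : Injective u) (hw : Injective w) {G H : BGraph α β} {G' H' : BGraph α' β'}
    (hG : ∀ p ∈ G, Prod.map u w p ∈ G')
    (hH : ∀ p ∈ H, Prod.map u w p ∈ H') (hc : Compatible G' H') : Compatible G H := by
  intro I J M M' hMG hM'H hM hM'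
  refine image_injective (hu.prodMap hw) <|
    hc (I.image u) (J.image w) _ _ (fun p hp => ?_) (fun p hp => ?_)
      (hM.image_prodMap hu hw) (hM'.image_prodMap hu hw)
  · obtain ⟨q, hq, rfl⟩ := mem_image.1 hp
    exact hG q (hMG hq)
  · obtain ⟨q, hq, rfl⟩ := mem_image.1 hp
    exact hH q (hM'H hq)

end Matching

section Topes

variable {m n d : ℕ}

theorem mem_topeGraph {f : Fin n → Fin d} {i : Fin n} {j : Fin d} :
    (i, j) ∈ topeGraph f ↔ f i = j := by
  simp [topeGraph]

theorem not_compatible_of_bijOn {f g : Fin n → Fin d} {J : Finset (Fin d)} {ψ : Fin d → Fin n}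
    {φ : Fin d → Fin d} (hφ : Set.BijOn φ J J) (hg : ∀ y ∈ J, g (ψ y) = y)
    (hf : ∀ y ∈ J, f (ψ y) = φ y) {y₀ : Fin d} (hy₀ : y₀ ∈ J) (hne : φ y₀ ≠ y₀) :
    ¬ Compatible (topeGraph f) (topeGraph g) := by
  intro hc
  have hψ : Set.InjOn ψ J := fun y hy y' hy' h => by rw [← hg y hy, ← hg y' hy', h]
  have hM : J.image (fun y => (ψ y, φ y)) ⊆ topeGraph f := fun p hp => by
    obtain ⟨y, hy, rfl⟩ := mem_image.1 hp
    exact mem_topeGraph.2 (hf y hy)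
  have hM' : J.image (fun y => (ψ y, y)) ⊆ topeGraph g := fun p hp => by
    obtain ⟨y, hy, rfl⟩ := mem_image.1 hp
    exact mem_topeGraph.2 (hg y hy)
  have heq := hc _ _ _ _ hM hM' (isMatching_image hψ hφ) (isMatching_image hψ (Set.bijOn_id _))
  have hy₀g := hM' (heq ▸ mem_image_of_mem (fun y => (ψ y, φ y)) hy₀)
  exact hne ((mem_topeGraph.1 hy₀g).symm.trans (hg y₀ hy₀))

def ExchangeAdj (f g : Fin n → Fin d) (x y : Fin d) : Prop :=
  ∃ i, g i = x ∧ f i = y ∧ x ≠ y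

theorem not_compatible_of_transGen {f g : Fin n → Fin d} {x : Fin d}
    (hx : TransGen (ExchangeAdj f g) x x) : ¬ Compatible (topeGraph f) (topeGraph g) := by
  classical
  let K := univ.filter fun y => ReflTransGen (ExchangeAdj f g) x y ∧
    ReflTransGen (ExchangeAdj f g) y x
  have hstep : ∀ y ∈ K, ∃ i, g i = y ∧ f i ∈ K ∧ f i ≠ y := by
    intro y hy
    obtain ⟨hxy, hyx⟩ := (mem_filter.1 hy).2
    obtain ⟨z, ⟨i, rfl, rfl, hne⟩, hzx⟩ : ∃ z, ExchangeAdj f g y z ∧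
        ReflTransGen (ExchangeAdj f g) z x := by
      rcases hyx.cases_head with rfl | h
      · exact TransGen.head'_iff.1 hx
      · exact h
    exact ⟨i, rfl, mem_filter.2 ⟨mem_univ _, hxy.tail ⟨i, rfl, rfl, hne⟩, hzx⟩, hne.symm⟩
  obtain ⟨_, ⟨i, -⟩, -⟩ := TransGen.head'_iff.1 hx
  have : Nonempty (Fin n) := ⟨i⟩
  choose! ψ hψg hψK hψne using hstep
  obtain ⟨J, hJK, ⟨y₀, hy₀⟩, hJ⟩ := exists_bijOn_of_mapsTo (φ := f ∘ ψ)
    ⟨x, mem_filter.2 ⟨mem_univ _, .refl, .refl⟩⟩ fun y hy => hψK y hy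
  exact not_compatible_of_bijOn hJ (fun y hy => hψg y (hJK hy)) (fun y _ => rfl) hy₀
    (hψne y₀ (hJK hy₀))

theorem card_filter_mem_eq_sum_topePos (f : Fin n → Fin d) (R : Finset (Fin d)) :
    #(univ.filter fun i => f i ∈ R) = ∑ x ∈ R, topePos f x := by
  rw [card_eq_sum_card_fiberwise (f := f) (s := univ.filter fun i => f i ∈ R) (t := R)
    fun i hi => (mem_filter.1 hi).2]
  refine sum_congr rfl fun x hx => congrArg card ?_
  ext i
  simp only [mem_filter, mem_univ, true_and, and_iff_right_iff_imp]
  rintro rfl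
  exact hx

/-- Cut argument: the set `R` of vertices reachable from `f i₀` is closed under arcs, so
`g⁻¹ R ⊆ f⁻¹ R`, strictly if `g i₀ ∉ R`. -/
theorem transGen_exchangeAdj {f g : Fin n → Fin d} {i₀ : Fin n} (hne : f i₀ ≠ g i₀)
    (hle : ∀ R : Finset (Fin d), f i₀ ∈ R → ∑ x ∈ R, topePos f x ≤ ∑ x ∈ R, topePos g x) :
    TransGen (ExchangeAdj f g) (f i₀) (f i₀) := by
  classical
  let R := univ.filter fun y => ReflTransGen (ExchangeAdj f g) (f i₀) y
  have hf₀ : f i₀ ∈ R := mem_filter.2 ⟨mem_univ _, .refl⟩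
  suffices hg₀ : g i₀ ∈ R from TransGen.tail' (mem_filter.1 hg₀).2 ⟨i₀, rfl, rfl, hne.symm⟩
  by_contra hg₀
  have hclosed : ∀ i, g i ∈ R → f i ∈ R := fun i hi => by
    by_cases hfg : f i = g i
    · rwa [hfg]
    · exact mem_filter.2 ⟨mem_univ _, (mem_filter.1 hi).2.tail ⟨i, rfl, rfl, Ne.symm hfg⟩⟩
  have hlt : #(univ.filter fun i => g i ∈ R) < #(univ.filter fun i => f i ∈ R) :=
    card_lt_card <| ssubset_iff_of_subset (monotone_filter_right _ fun i _ => hclosed i) |>.2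
      ⟨i₀, mem_filter.2 ⟨mem_univ _, hf₀⟩, fun h => hg₀ (mem_filter.1 h).2⟩
  rw [card_filter_mem_eq_sum_topePos, card_filter_mem_eq_sum_topePos] at hlt
  exact (hle R hf₀).not_gt hlt

theorem Compatible.apply_eq_of_sum_topePos_le {f g : Fin n → Fin d}
    (hc : Compatible (topeGraph f) (topeGraph g)) {i₀ : Fin n}
    (hle : ∀ R : Finset (Fin d), f i₀ ∈ R → ∑ x ∈ R, topePos f x ≤ ∑ x ∈ R, topePos g x) :
    f i₀ = g i₀ :=
  by_contra fun hne => not_compatible_of_transGen (transGen_exchangeAdj hne hle) hc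

theorem Compatible.eq_of_topePos_eq {f g : Fin n → Fin d}
    (hc : Compatible (topeGraph f) (topeGraph g)) (hpos : topePos f = topePos g) : f = g :=
  funext fun _ => hc.apply_eq_of_sum_topePos_le fun _ _ => by rw [hpos]

theorem Compatible.apply_eq_of_topePos_eq_add_unitVec {f g : Fin n → Fin d}
    (hc : Compatible (topeGraph f) (topeGraph g)) {u : Fin d → ℕ} {a : Fin d} {i₀ : Fin n}
    (hf : topePos f = u + unitVec a) (hg : topePos g = u + unitVec (f i₀)) : g i₀ = f i₀ := by
  refine (hc.apply_eq_of_sum_topePos_le fun R hR => ?_).symm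
  simp only [hf, hg, Pi.add_apply, sum_add_distrib, unitVec, sum_ite_eq', hR, if_true]
  split_ifs <;> omega

theorem topePos_comp_apply_of_injective {w : Fin d → Fin m} (hw : Injective w) (f : Fin n → Fin d)
    (j : Fin d) : topePos (w ∘ f) (w j) = topePos f j := by
  simp only [topePos, comp_apply, hw.eq_iff]

theorem topePos_eq_ite_add_topePos_comp_succAbove (f : Fin (n + 1) → Fin d) (i₀ : Fin (n + 1))
    (j : Fin d) :
    topePos f j = (if f i₀ = j then 1 else 0) + topePos (f ∘ i₀.succAbove) j := by
  simp only [topePos, card_filter, comp_apply]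
  exact Fin.sum_univ_succAbove _ i₀

theorem apply_ne_of_topePos_eq_zero {f : Fin n → Fin d} {j : Fin d} (h : topePos f j = 0)
    (i : Fin n) : f i ≠ j := by
  rw [topePos, card_eq_zero, filter_eq_empty_iff] at h
  exact h (mem_univ i)

theorem Compatible.topeGraph_comp {f g : Fin n → Fin d}
    (hc : Compatible (topeGraph f) (topeGraph g)) {e : Fin m → Fin n} (he : Injective e) :
    Compatible (topeGraph (f ∘ e)) (topeGraph (g ∘ e)) := by
  refine hc.of_prodMap (w := id) he injective_id ?_ ?_ <;>
  · intro p hp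
    obtain ⟨i, -, rfl⟩ := mem_image.1 hp
    exact mem_topeGraph.2 rfl

theorem Compatible.of_topeGraph_comp {f g : Fin n → Fin d} {w : Fin d → Fin m} (hw : Injective w)
    (hc : Compatible (topeGraph (w ∘ f)) (topeGraph (w ∘ g))) :
    Compatible (topeGraph f) (topeGraph g) := by
  refine hc.of_prodMap (u := id) injective_id hw ?_ ?_ <;>
  · intro p hp
    obtain ⟨i, -, rfl⟩ := mem_image.1 hp
    exact mem_topeGraph.2 rfl

end Topes

/-- `T v` is the tope at the lattice point `v`; the values of `T` off `n Δ^{d-1}` are irrelevant. -/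
structure IsExtTopeArrangement {n d : ℕ} (T : (Fin d → ℕ) → Fin n → Fin d) : Prop where
  topePos_eq : ∀ v : Fin d → ℕ, ∑ j, v j = n → topePos (T v) = v
  compatible : ∀ v w : Fin d → ℕ, ∑ j, v j = n → ∑ j, w j = n →
    Compatible (topeGraph (T v)) (topeGraph (T w))

namespace IsExtTopeArrangement

variable {n d : ℕ}

theorem contraction [NeZero d] {T : (Fin (d + 1) → ℕ) → Fin n → Fin (d + 1)}
    (hT : IsExtTopeArrangement T) (j₀ : Fin (d + 1)) :
    ∃ T' : (Fin d → ℕ) → Fin n → Fin d, IsExtTopeArrangement T' ∧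
      ∀ v : Fin (d + 1) → ℕ, ∑ j, v j = n → v j₀ = 0 →
        ∀ i, j₀.succAbove (T' (v ∘ j₀.succAbove) i) = T v i := by
  let ext : (Fin d → ℕ) → Fin (d + 1) → ℕ := fun v' => j₀.insertNth 0 v'
  have hsum : ∀ v', ∑ j, v' j = n → ∑ j, ext v' j = n := fun v' hv' => by
    simpa [ext, Fin.sum_univ_succAbove _ j₀] using hv'
  have hsucc : ∀ v', ∑ j, v' j = n →
      j₀.succAbove ∘ invFun j₀.succAbove ∘ T (ext v') = T (ext v') :=
    fun v' hv' => funext fun i => invFun_eq <| Fin.exists_succAbove_eq <|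
      apply_ne_of_topePos_eq_zero (by simp [hT.topePos_eq _ (hsum v' hv'), ext]) i
  refine ⟨fun v' => invFun j₀.succAbove ∘ T (ext v'), ⟨fun v' hv' => funext fun j => ?_,
    fun v' w' hv' hw' => ?_⟩, fun v hv hv₀ i => ?_⟩
  · rw [← topePos_comp_apply_of_injective Fin.succAbove_right_injective, hsucc v' hv',
      hT.topePos_eq _ (hsum v' hv')]
    simp [ext]
  · refine Compatible.of_topeGraph_comp (Fin.succAbove_right_injective (p := j₀)) ?_
    rw [hsucc v' hv', hsucc w' hw']
    exact hT.compatible _ _ (hsum v' hv') (hsum w' hw')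
  · have hv' : ∑ j, (v ∘ j₀.succAbove) j = n := by
      simpa [Fin.sum_univ_succAbove _ j₀, hv₀] using hv
    have hext : ext (v ∘ j₀.succAbove) = v := by
      simp only [ext, ← hv₀]
      exact Fin.insertNth_self_removeNth j₀ v
    simpa only [hext, comp_apply] using congrFun (hsucc _ hv') i

theorem compatible_comp_succAbove {T : (Fin d → ℕ) → Fin (n + 1) → Fin d}
    (hT : IsExtTopeArrangement T) (i₀ : Fin (n + 1)) {v w : Fin d → ℕ} (hv : ∑ j, v j = n + 1)
    (hw : ∑ j, w j = n + 1) :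
    Compatible (topeGraph (T v ∘ i₀.succAbove)) (topeGraph (T w ∘ i₀.succAbove)) :=
  (hT.compatible v w hv hw).topeGraph_comp Fin.succAbove_right_injective

theorem comp_succAbove_eq_of_topePos_eq {T : (Fin d → ℕ) → Fin (n + 1) → Fin d}
    (hT : IsExtTopeArrangement T) (i₀ : Fin (n + 1)) {v w : Fin d → ℕ} (hv : ∑ j, v j = n + 1)
    (hw : ∑ j, w j = n + 1)
    (h : topePos (T v ∘ i₀.succAbove) = topePos (T w ∘ i₀.succAbove)) :
    T v ∘ i₀.succAbove = T w ∘ i₀.succAbove :=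
  (hT.compatible_comp_succAbove i₀ hv hw).eq_of_topePos_eq h

theorem exists_topePos_comp_succAbove_eq [NeZero d] {T : (Fin d → ℕ) → Fin (n + 1) → Fin d}
    (hT : IsExtTopeArrangement T) (i₀ : Fin (n + 1)) {v' : Fin d → ℕ} (hv' : ∑ j, v' j = n) :
    ∃ v : Fin d → ℕ, ∑ j, v j = n + 1 ∧ topePos (T v ∘ i₀.succAbove) = v' := by
  have hsum : ∀ j : Fin d, ∑ k, (v' + unitVec j) k = n + 1 := fun j => by
    simp [sum_add_distrib, hv', unitVec]
  set j := T (v' + unitVec 0) i₀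
  have hj : T (v' + unitVec j) i₀ = j :=
    (hT.compatible _ _ (hsum 0) (hsum j)).apply_eq_of_topePos_eq_add_unitVec
      (hT.topePos_eq _ (hsum 0)) (hT.topePos_eq _ (hsum j))
  refine ⟨v' + unitVec j, hsum j, funext fun k => ?_⟩
  have := topePos_eq_ite_add_topePos_comp_succAbove (T (v' + unitVec j)) i₀ k
  rw [hT.topePos_eq _ (hsum j), hj] at this
  by_cases hk : j = k
  · subst hk
    simp [unitVec] at this
    omega
  · simp [unitVec, hk, Ne.symm hk] at this
    omega

end IsExtTopeArrangement

theorem statement11 {n d : ℕ}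
    (T : (Fin (d + 2) → ℕ) → Fin (n + 2) → Fin (d + 2))
    (hpos : ∀ v : Fin (d + 2) → ℕ, (∑ j, v j) = n + 2 → topePos (T v) = v)
    (hcompat : ∀ v v' : Fin (d + 2) → ℕ, (∑ j, v j) = n + 2 → (∑ j, v' j) = n + 2 →
      Compatible (topeGraph (T v)) (topeGraph (T v'))) :
    (∀ j0 : Fin (d + 2), ∃ T' : (Fin (d + 1) → ℕ) → Fin (n + 2) → Fin (d + 1),
      (∀ v' : Fin (d + 1) → ℕ, (∑ j, v' j) = n + 2 → topePos (T' v') = v') ∧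
      (∀ v' w' : Fin (d + 1) → ℕ, (∑ j, v' j) = n + 2 → (∑ j, w' j) = n + 2 →
        Compatible (topeGraph (T' v')) (topeGraph (T' w'))) ∧
      (∀ v : Fin (d + 2) → ℕ, (∑ j, v j) = n + 2 → v j0 = 0 →
        ∀ i, j0.succAbove (T' (v ∘ j0.succAbove) i) = T v i)) ∧
    (∀ i0 : Fin (n + 2),
      (∀ v' : Fin (d + 2) → ℕ, (∑ j, v' j) = n + 1 →
        ∃ v : Fin (d + 2) → ℕ, ((∑ j, v j) = n + 2) ∧
          topePos (T v ∘ i0.succAbove) = v') ∧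
      (∀ v w : Fin (d + 2) → ℕ, (∑ j, v j) = n + 2 → (∑ j, w j) = n + 2 →
        topePos (T v ∘ i0.succAbove) = topePos (T w ∘ i0.succAbove) →
        T v ∘ i0.succAbove = T w ∘ i0.succAbove) ∧
      (∀ v w : Fin (d + 2) → ℕ, (∑ j, v j) = n + 2 → (∑ j, w j) = n + 2 →
        Compatible (topeGraph (T v ∘ i0.succAbove))
          (topeGraph (T w ∘ i0.succAbove)))) := by
  have hT : IsExtTopeArrangement T := ⟨hpos, hcompat⟩
  refine ⟨fun j₀ => ?_, fun i₀ => ⟨fun v' hv' => hT.exists_topePos_comp_succAbove_eq i₀ hv',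
    fun v w hv hw => hT.comp_succAbove_eq_of_topePos_eq i₀ hv hw,
    fun v w hv hw => hT.compatible_comp_succAbove i₀ hv hw⟩⟩
  obtain ⟨T', hT', hT'T⟩ := hT.contraction j₀
  exact ⟨T', hT'.topePos_eq, hT'.compatible, hT'T⟩
end
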